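/- If Z has the extended skew-normal density f(z) = (1/Φ(τ)) φ(z) Φ(τ√(1+α²) + αz), then E[Z] = ζ₁(τ)·δ, where ζ₁(x) = φ(x)/Φ(x) and δ = α/√(1+α²). -/

import Mathlib

/-! Stein's identity `∫ z φ(z) g(z) dz = ∫ φ(z) g'(z) dz` (integration by parts, as `φ' = -zφ`
and `φ g` vanishes at `±∞` for bounded `g`), applied to `g(z) = Φ(τ√(1+α²) + αz)`,
turns the mean into `α ∫ φ(z) φ(τ√(1+α²) + αz) dz / Φ(τ)`; completing the square evaluates this
Gaussian integral to `φ(τ) / √(1+α²)`. -/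

open MeasureTheory Real Filter Topology

noncomputable def phi (x : ℝ) : ℝ := (Real.sqrt (2 * Real.pi))⁻¹ * Real.exp (-x ^ 2 / 2)

noncomputable def Phi (x : ℝ) : ℝ := ∫ t in Set.Iic x, phi t

noncomputable def zeta1 (x : ℝ) : ℝ := phi x / Phi x

/-- ESN(0,1,α,τ) density -/
noncomputable def esnPdf (α τ z : ℝ) : ℝ :=
  (Phi τ)⁻¹ * phi z * Phi (τ * Real.sqrt (1 + α ^ 2) + α * z)

lemma phi_nonneg (x : ℝ) : 0 ≤ phi x := by
  unfold phi; positivity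

lemma phi_le (x : ℝ) : phi x ≤ (√(2 * π))⁻¹ := by
  unfold phi
  refine mul_le_of_le_one_right (by positivity) (exp_le_one_iff.2 ?_)
  nlinarith [sq_nonneg x]

lemma phi_neg (x : ℝ) : phi (-x) = phi x := by
  simp [phi]

@[fun_prop]
lemma continuous_phi : Continuous phi := by
  unfold phi; fun_prop

lemma phi_eq_mul_exp (x : ℝ) : phi x = (√(2 * π))⁻¹ * exp (-(1 / 2) * x ^ 2) := by
  unfold phi; ring_nf

lemma integrable_phi : Integrable phi := by
  simp only [funext phi_eq_mul_exp]
  exact (integrable_exp_neg_mul_sq (by norm_num)).const_mul _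

lemma integrable_mul_phi : Integrable fun z : ℝ => z * phi z := by
  simp only [phi_eq_mul_exp, mul_left_comm _ (√(2 * π))⁻¹]
  exact (integrable_mul_exp_neg_mul_sq (by norm_num)).const_mul _

lemma integral_phi : ∫ x, phi x = 1 := by
  simp only [phi_eq_mul_exp]
  rw [integral_const_mul, integral_gaussian, show π / (1 / 2) = 2 * π by ring,
    inv_mul_cancel₀ (by positivity)]

lemma hasDerivAt_phi (x : ℝ) : HasDerivAt phi (-x * phi x) x := by
  have h : HasDerivAt (fun y : ℝ => -y ^ 2 / 2) (-x) x := by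
    simpa [neg_div] using ((hasDerivAt_pow 2 x).neg.div_const 2)
  exact (h.exp.const_mul (√(2 * π))⁻¹).congr_deriv (by unfold phi; ring)

lemma tendsto_phi_atTop : Tendsto phi atTop (𝓝 0) := by
  unfold phi
  have h : Tendsto (fun x : ℝ => -x ^ 2 / 2) atTop atBot :=
    (tendsto_neg_atTop_atBot.comp (tendsto_pow_atTop two_ne_zero)).atBot_div_const two_pos
  simpa [Function.comp_def] using (tendsto_exp_atBot.comp h).const_mul (√(2 * π))⁻¹

lemma tendsto_phi_atBot : Tendsto phi atBot (𝓝 0) := by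
  simpa [Function.comp_def, phi_neg] using tendsto_phi_atTop.comp tendsto_neg_atBot_atTop

lemma Phi_nonneg (x : ℝ) : 0 ≤ Phi x :=
  integral_nonneg phi_nonneg

lemma Phi_le_one (x : ℝ) : Phi x ≤ 1 :=
  integral_phi ▸ setIntegral_le_integral integrable_phi (.of_forall phi_nonneg)

lemma hasDerivAt_Phi (x : ℝ) : HasDerivAt Phi (phi x) x := by
  have h : ∀ u, Phi u = Phi 0 + ∫ t in (0 : ℝ)..u, phi t := fun u => by
    rw [← sub_eq_iff_eq_add', Phi, Phi]
    exact intervalIntegral.integral_Iic_sub_Iic integrable_phi.integrableOn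
      integrable_phi.integrableOn
  rw [funext h]
  exact (intervalIntegral.integral_hasDerivAt_right integrable_phi.intervalIntegrable
    (continuous_phi.stronglyMeasurableAtFilter _ _) continuous_phi.continuousAt).const_add _

theorem integral_mul_phi_mul_eq_integral_phi_mul_deriv {g g' : ℝ → ℝ} {C : ℝ}
    (hg : ∀ z, HasDerivAt g (g' z) z) (hg_bdd : ∀ z, |g z| ≤ C)
    (hg' : Integrable fun z => phi z * g' z) :
    ∫ z, z * (phi z * g z) = ∫ z, phi z * g' z := by
  have hg_cont : Continuous g := continuous_iff_continuousAt.2 fun z => (hg z).continuousAt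
  have hint : Integrable fun z => z * (phi z * g z) := by
    refine (integrable_mul_phi.mul_const C).mono
      (continuous_id.mul (continuous_phi.mul hg_cont)).aestronglyMeasurable (.of_forall fun z => ?_)
    simp only [norm_mul, Real.norm_eq_abs, mul_assoc]
    exact mul_le_mul_of_nonneg_left (mul_le_mul_of_nonneg_left
      ((hg_bdd z).trans (le_abs_self C)) (abs_nonneg _)) (abs_nonneg _)
  have hbound : ∀ z, ‖-(phi z * g z)‖ ≤ C * phi z := fun z => by
    rw [norm_neg, norm_mul, Real.norm_eq_abs, abs_of_nonneg (phi_nonneg z), mul_comm,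
      Real.norm_eq_abs]
    exact mul_le_mul_of_nonneg_right (hg_bdd z) (phi_nonneg z)
  have hzero := integral_of_hasDerivAt_of_tendsto
    (fun z => ((hasDerivAt_phi z).mul (hg z)).neg.congr_deriv
      (by ring : _ = z * (phi z * g z) - phi z * g' z))
    (hint.sub hg')
    (squeeze_zero_norm hbound (by simpa using tendsto_phi_atBot.const_mul C))
    (squeeze_zero_norm hbound (by simpa using tendsto_phi_atTop.const_mul C))
  rwa [sub_zero, integral_sub hint hg', sub_eq_zero] at hzero

lemma integrable_phi_mul_phi_add_mul (a b : ℝ) : Integrable fun z => phi z * phi (a + b * z) :=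
  integrable_phi.mul_bdd (by fun_prop : Continuous _).aestronglyMeasurable
    (.of_forall fun z => by rw [Real.norm_of_nonneg (phi_nonneg _)]; exact phi_le _)

lemma phi_mul_phi_add_mul (a b z : ℝ) :
    phi z * phi (a + b * z) = phi (a / √(1 + b ^ 2)) *
      ((√(2 * π))⁻¹ * exp (-((1 + b ^ 2) / 2) * (z + a * b / (1 + b ^ 2)) ^ 2)) := by
  have hb : 0 < 1 + b ^ 2 := by positivity
  have hexp : -z ^ 2 / 2 + -(a + b * z) ^ 2 / 2 =
      -(a / √(1 + b ^ 2)) ^ 2 / 2 + -((1 + b ^ 2) / 2) * (z + a * b / (1 + b ^ 2)) ^ 2 := by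
    rw [div_pow, sq_sqrt hb.le]
    field_simp
    ring
  unfold phi
  rw [mul_mul_mul_comm, ← exp_add, hexp, exp_add]
  ring

theorem integral_phi_mul_phi_add_mul (a b : ℝ) :
    ∫ z, phi z * phi (a + b * z) = phi (a / √(1 + b ^ 2)) / √(1 + b ^ 2) := by
  have hb : 0 < 1 + b ^ 2 := by positivity
  simp only [phi_mul_phi_add_mul]
  rw [integral_const_mul, integral_const_mul,
    integral_add_right_eq_self (fun z => exp (-((1 + b ^ 2) / 2) * z ^ 2)), integral_gaussian,
    show π / ((1 + b ^ 2) / 2) = 2 * π / (1 + b ^ 2) by field_simp, sqrt_div' _ hb.le]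
  field_simp

theorem esn_mean (α τ : ℝ) :
    ∫ z : ℝ, z * esnPdf α τ z = zeta1 τ * (α / Real.sqrt (1 + α ^ 2)) := by
  set c := τ * √(1 + α ^ 2)
  have hc : c / √(1 + α ^ 2) = τ := mul_div_cancel_right₀ τ (by positivity)
  have hderiv (z : ℝ) : HasDerivAt (fun z => Phi (c + α * z)) (α * phi (c + α * z)) z := by
    have hlin : HasDerivAt (fun z => c + α * z) α z := by
      simpa using ((hasDerivAt_id z).const_mul α).const_add c
    exact ((hasDerivAt_Phi _).comp z hlin).congr_deriv (mul_comm _ _)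
  have hbdd (z : ℝ) : |Phi (c + α * z)| ≤ 1 := by
    rw [abs_of_nonneg (Phi_nonneg _)]; exact Phi_le_one _
  have hint : Integrable fun z => phi z * (α * phi (c + α * z)) := by
    simpa only [mul_left_comm α] using (integrable_phi_mul_phi_add_mul c α).const_mul α
  calc ∫ z, z * esnPdf α τ z = (Phi τ)⁻¹ * ∫ z, z * (phi z * Phi (c + α * z)) := by
        rw [← integral_const_mul]; congr with z; unfold esnPdf; ring
    _ = (Phi τ)⁻¹ * (α * ∫ z, phi z * phi (c + α * z)) := by
        rw [integral_mul_phi_mul_eq_integral_phi_mul_deriv hderiv hbdd hint,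
          ← integral_const_mul α]
        simp only [mul_left_comm α]
    _ = zeta1 τ * (α / √(1 + α ^ 2)) := by
        rw [integral_phi_mul_phi_add_mul, hc, zeta1]; ring
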